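/- Let r > 0 and let s, c, α, H be real numbers with s² + c² = 1, s ≠ 0, σ := (1/3)sH + 2cα ≠ 0 and η := (2/3)sH + 2cα ≠ 0. Define the 4×4 matrix a with rows ((−(1/3)cH + 2sα)/(rσ), 0, 0, 0), ((−(1/3)αH)/(srσ), −c/(sr), 0, 0), ((−(10/3)Hα²)/(rση), 0, (−(2/3)cH + 2sα)/(rη), 0), (((4/3)sα²H² + (2/3)cα³H)/(srση), 0, (−(2/3)αH)/(srη), −c/(sr)), and the numbers λ₁ := (−(1/3)cH + 2sα)/(rσ), λ₂ = λ₄ := −c/(sr), λ₃ := (−(2/3)cH + 2sα)/(rη). Then the vectors ξ¹ = (1, −H/6, −5α, (11/6)αH), ξ² = (0,1,0,0), ξ³ = (0,0,1,−H/3), ξ⁴ = (0,0,0,1) satisfy a·ξ¹ = λ₁ξ¹, a·ξ² = λ₂ξ², a·ξ³ = λ₃ξ³, a·ξ⁴ = λ₄ξ⁴, and ξ¹, ξ², ξ³, ξ⁴ are linearly independent; hence a has a complete set of real eigenvectors (the system is hyperbolic). -/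

import Mathlib

/-!
The matrix `a` is lower triangular and depends on `r` only through the overall factor `1 / r`,
so it suffices to treat `r = 1`. Reading each eigen-equation row by row and clearing
denominators, everything reduces to `c * σ + s * (-(1 / 3) * c * H + 2 * s * α) = 2 * α`
and its analogue for `η`, which are `s ^ 2 + c ^ 2 = 1` in disguise: they say that
`λ₁ - λ₂ = 2 * α / (s * r * σ)` and `λ₃ - λ₄ = 2 * α / (s * r * η)`.
The eigenvectors are the rows of a unitriangular matrix, hence independent.
-/

open Matrix

theorem Matrix.linearIndependent_rows_of_isUpperTriangular {m K : Type*} [Fintype m]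
    [LinearOrder m] [Field K] {M : Matrix m m K} (hM : M.IsUpperTriangular)
    (hdiag : ∀ i, M i i ≠ 0) : LinearIndependent K M.row := by
  rw [linearIndependent_rows_iff_isUnit, isUnit_iff_isUnit_det, det_of_isUpperTriangular hM,
    isUnit_iff_ne_zero]
  exact Finset.prod_ne_zero_iff.mpr fun i _ => hdiag i

theorem Matrix.smul_mulVec_eq_smul_of_mulVec_eq_smul {n R : Type*} [Fintype n] [CommSemiring R]
    {M : Matrix n n R} {v : n → R} {μ : R} (k : R) (h : M *ᵥ v = μ • v) :
    (k • M) *ᵥ v = (k * μ) • v := by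
  rw [smul_mulVec, h, smul_smul]

namespace HeisenbergHyperbolicity

noncomputable def coefficientMatrix (r s c α H σ η : ℝ) : Matrix (Fin 4) (Fin 4) ℝ :=
  !![(-((1 / 3) * c * H) + 2 * s * α) / (r * σ), 0, 0, 0;
     (-((1 / 3) * α * H)) / (s * r * σ), -c / (s * r), 0, 0;
     (-((10 / 3) * H * α ^ 2)) / (r * σ * η), 0,
       (-((2 / 3) * c * H) + 2 * s * α) / (r * η), 0;
     ((4 / 3) * s * α ^ 2 * H ^ 2 + (2 / 3) * c * α ^ 3 * H) / (s * r * σ * η),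
       0, (-((2 / 3) * α * H)) / (s * r * η), -c / (s * r)]

variable {r s c α H σ η : ℝ}

theorem coefficientMatrix_eq_inv_smul :
    coefficientMatrix r s c α H σ η = r⁻¹ • coefficientMatrix 1 s c α H σ η := by
  ext i j
  fin_cases i <;> fin_cases j <;> simp [coefficientMatrix] <;> ring

theorem coefficientMatrix_mulVec_eq_smul {v : Fin 4 → ℝ} {μ : ℝ}
    (h : coefficientMatrix 1 s c α H σ η *ᵥ v = μ • v) :
    coefficientMatrix r s c α H σ η *ᵥ v = (r⁻¹ * μ) • v := by
  rw [coefficientMatrix_eq_inv_smul]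
  exact smul_mulVec_eq_smul_of_mulVec_eq_smul _ h

theorem eigenvalue_gap_identity (hsc : s ^ 2 + c ^ 2 = 1) {t : ℝ}
    (hσdef : σ = t * s * H + 2 * c * α) :
    c * σ + s * (-(t * c * H) + 2 * s * α) = 2 * α := by
  subst hσdef
  linear_combination (2 * α) * hsc

theorem coefficientMatrix_one_mulVec_first (hsc : s ^ 2 + c ^ 2 = 1) (hs : s ≠ 0)
    (hσdef : σ = (1 / 3) * s * H + 2 * c * α) (hηdef : η = (2 / 3) * s * H + 2 * c * α)
    (hσ : σ ≠ 0) (hη : η ≠ 0) :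
    coefficientMatrix 1 s c α H σ η *ᵥ ![1, -(H / 6), -(5 * α), (11 / 6) * α * H] =
      ((-((1 / 3) * c * H) + 2 * s * α) / σ) • ![1, -(H / 6), -(5 * α), (11 / 6) * α * H] := by
  have hgap := eigenvalue_gap_identity hsc hσdef
  ext i
  fin_cases i <;> simp [coefficientMatrix, mulVec, dotProduct, Fin.sum_univ_four] <;> field_simp
  · linear_combination (3 * H) * hgap
  · linear_combination (5 * α * H) * hgap + (5 * α * (-(H * c) + 6 * α * s)) * hηdef
      - (5 * α * (-(H * c) + 6 * α * s)) * hσdef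
  · linear_combination (-(33 * α * H * η)) * hgap + (60 * α ^ 2 * H) * hσdef
      - (66 * α ^ 2 * H) * hηdef

theorem coefficientMatrix_one_mulVec_second :
    coefficientMatrix 1 s c α H σ η *ᵥ ![0, 1, 0, 0] = (-c / s) • ![0, 1, 0, 0] := by
  ext i
  fin_cases i <;> simp [coefficientMatrix, mulVec, dotProduct, Fin.sum_univ_four]

theorem coefficientMatrix_one_mulVec_third (hsc : s ^ 2 + c ^ 2 = 1) (hs : s ≠ 0)
    (hηdef : η = (2 / 3) * s * H + 2 * c * α) (hη : η ≠ 0) :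
    coefficientMatrix 1 s c α H σ η *ᵥ ![0, 0, 1, -(H / 3)] =
      ((-((2 / 3) * c * H) + 2 * s * α) / η) • ![0, 0, 1, -(H / 3)] := by
  have hgap := eigenvalue_gap_identity hsc hηdef
  ext i
  fin_cases i <;> simp [coefficientMatrix, mulVec, dotProduct, Fin.sum_univ_four]
  field_simp
  linear_combination (3 * H) * hgap

theorem coefficientMatrix_one_mulVec_fourth :
    coefficientMatrix 1 s c α H σ η *ᵥ ![0, 0, 0, 1] = (-c / s) • ![0, 0, 0, 1] := by
  ext i
  fin_cases i <;> simp [coefficientMatrix, mulVec, dotProduct, Fin.sum_univ_four]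

theorem linearIndependent_eigenvectors :
    LinearIndependent ℝ ![![1, -(H / 6), -(5 * α), (11 / 6) * α * H], ![0, 1, 0, 0],
      ![0, 0, 1, -(H / 3)], ![0, 0, 0, 1]] := by
  refine linearIndependent_rows_of_isUpperTriangular (M := Matrix.of ![_, _, _, _]) ?_ ?_
  · intro i j hij
    fin_cases i <;> fin_cases j <;> simp_all
  · intro i
    fin_cases i <;> simp

end HeisenbergHyperbolicity

open HeisenbergHyperbolicity in
theorem stmt_13 (r s c α H σ η : ℝ) (hsc : s ^ 2 + c ^ 2 = 1) (hs : s ≠ 0)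
    (hσdef : σ = (1 / 3) * s * H + 2 * c * α) (hηdef : η = (2 / 3) * s * H + 2 * c * α)
    (hσ : σ ≠ 0) (hη : η ≠ 0)
    (a : Matrix (Fin 4) (Fin 4) ℝ)
    (ha : a = !![(-((1 / 3) * c * H) + 2 * s * α) / (r * σ), 0, 0, 0;
                 (-((1 / 3) * α * H)) / (s * r * σ), -c / (s * r), 0, 0;
                 (-((10 / 3) * H * α ^ 2)) / (r * σ * η), 0,
                   (-((2 / 3) * c * H) + 2 * s * α) / (r * η), 0;
                 ((4 / 3) * s * α ^ 2 * H ^ 2 + (2 / 3) * c * α ^ 3 * H) / (s * r * σ * η),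
                   0, (-((2 / 3) * α * H)) / (s * r * η), -c / (s * r)])
    (lam₁ lam₂ lam₃ lam₄ : ℝ)
    (hlam₁ : lam₁ = (-((1 / 3) * c * H) + 2 * s * α) / (r * σ))
    (hlam₂ : lam₂ = -c / (s * r)) (hlam₄ : lam₄ = -c / (s * r))
    (hlam₃ : lam₃ = (-((2 / 3) * c * H) + 2 * s * α) / (r * η))
    (ξ₁ ξ₂ ξ₃ ξ₄ : Fin 4 → ℝ)
    (hξ₁ : ξ₁ = ![1, -(H / 6), -(5 * α), (11 / 6) * α * H])
    (hξ₂ : ξ₂ = ![0, 1, 0, 0])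
    (hξ₃ : ξ₃ = ![0, 0, 1, -(H / 3)])
    (hξ₄ : ξ₄ = ![0, 0, 0, 1]) :
    a.mulVec ξ₁ = lam₁ • ξ₁ ∧ a.mulVec ξ₂ = lam₂ • ξ₂ ∧ a.mulVec ξ₃ = lam₃ • ξ₃ ∧
      a.mulVec ξ₄ = lam₄ • ξ₄ ∧ LinearIndependent ℝ ![ξ₁, ξ₂, ξ₃, ξ₄] := by
  change a = coefficientMatrix r s c α H σ η at ha
  subst ha hlam₁ hlam₂ hlam₃ hlam₄ hξ₁ hξ₂ hξ₃ hξ₄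
  refine ⟨?_, ?_, ?_, ?_, linearIndependent_eigenvectors⟩
  · convert coefficientMatrix_mulVec_eq_smul
      (coefficientMatrix_one_mulVec_first hsc hs hσdef hηdef hσ hη) using 2
    ring
  · convert coefficientMatrix_mulVec_eq_smul coefficientMatrix_one_mulVec_second using 2
    ring
  · convert coefficientMatrix_mulVec_eq_smul
      (coefficientMatrix_one_mulVec_third hsc hs hηdef hη) using 2
    ring
  · convert coefficientMatrix_mulVec_eq_smul coefficientMatrix_one_mulVec_fourth using 2
    ring
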